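/- arXiv:0909.5286 — 3 statements merged into one kernel-verified Lean document; each statement's English description precedes it below -/
import Mathlib

section
/- For every ε > 0 and every s > 0, the inverse function δ^ε of γ^ε is differentiable at s and its derivative satisfies s·(δ^ε)'(s) ≥ 1. -/
/-!
On `(0, ∞)` the inverse of `γ^ε` is explicit: `log` up to `exp (1/ε)` and the affine map
`y ↦ y / exp (1/ε) + 1/ε - 1` beyond it. The two pieces have the same value and slope at the
junction, so `δ^ε` is differentiable with `(δ^ε)'(s) = 1 / min s (exp (1/ε)) ≥ 1 / s`.
-/

open Real Set Filter Topology

noncomputable section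

def expThenAffine (c r : ℝ) : ℝ := if r ≤ c then exp r else exp c * (1 + r - c)

def logThenAffine (c y : ℝ) : ℝ := if y ≤ exp c then log y else y / exp c + (c - 1)

theorem expThenAffine_logThenAffine (c : ℝ) {y : ℝ} (hy : 0 < y) :
    expThenAffine c (logThenAffine c y) = y := by
  unfold logThenAffine
  split_ifs with hyc
  · have hlog : log y ≤ c := (log_le_iff_le_exp hy).mpr hyc
    rw [expThenAffine, if_pos hlog, exp_log hy]
  · have hlt : c < y / exp c + (c - 1) := by
      have := (one_lt_div (exp_pos c)).mpr (not_le.mp hyc)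
      linarith
    rw [expThenAffine, if_neg (not_le.mpr hlt)]
    field_simp
    ring

theorem eqOn_logThenAffine_of_leftInverse {c : ℝ} {δ : ℝ → ℝ}
    (hδ : ∀ r, δ (expThenAffine c r) = r) : EqOn δ (logThenAffine c) (Ioi 0) := fun y hy => by
  rw [← hδ (logThenAffine c y), expThenAffine_logThenAffine c hy]

theorem HasDerivAt.ite_le_self {f g : ℝ → ℝ} {a f' : ℝ} (hf : HasDerivAt f f' a)
    (hg : HasDerivAt g f' a) (hfg : f a = g a) :
    HasDerivAt (fun x => if x ≤ a then f x else g x) f' a := by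
  have hleft : HasDerivWithinAt (fun x => if x ≤ a then f x else g x) f' (Iic a) a :=
    hf.hasDerivWithinAt.congr (fun x hx => if_pos hx) (if_pos le_rfl)
  have hright : HasDerivWithinAt (fun x => if x ≤ a then f x else g x) f' (Ici a) a := by
    refine hg.hasDerivWithinAt.congr (fun x hx => ?_) (by rw [if_pos le_rfl, hfg])
    rcases (mem_Ici.mp hx).eq_or_lt with rfl | hlt
    · rw [if_pos le_rfl, hfg]
    · exact if_neg (not_le.mpr hlt)
  simpa [Iic_union_Ici] using hleft.union hright

theorem hasDerivAt_logThenAffine (c : ℝ) {y : ℝ} (hy : 0 < y) :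
    HasDerivAt (logThenAffine c) (min y (exp c))⁻¹ y := by
  have haffine : ∀ x, HasDerivAt (fun y => y / exp c + (c - 1)) (exp c)⁻¹ x := fun x => by
    simpa using ((hasDerivAt_id x).div_const (exp c)).add_const (c - 1)
  rcases lt_trichotomy y (exp c) with hlt | rfl | hgt
  · rw [min_eq_left hlt.le]
    refine (hasDerivAt_log hy.ne').congr_of_eventuallyEq ?_
    filter_upwards [Iio_mem_nhds hlt] with x hx using if_pos hx.le
  · rw [min_self]
    refine (hasDerivAt_log hy.ne').ite_le_self (haffine _) ?_
    rw [log_exp, div_self (exp_pos c).ne']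
    ring
  · rw [min_eq_right hgt.le]
    refine (haffine y).congr_of_eventuallyEq ?_
    filter_upwards [Ioi_mem_nhds hgt] with x hx using if_neg (not_le.mpr hx)

theorem stmt_3_general (ε : ℝ) (γ δ : ℝ → ℝ)
    (hγ : ∀ r : ℝ, γ r = if r ≤ 1/ε then Real.exp r else Real.exp (1/ε) * (1 + r - 1/ε))
    (hδ : ∀ r : ℝ, δ (γ r) = r) :
    ∀ s : ℝ, 0 < s → DifferentiableAt ℝ δ s ∧ 1 ≤ s * deriv δ s := by
  intro s hs
  have hγ' : γ = expThenAffine (1/ε) := funext hγ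
  subst hγ'
  have hδ_eq : δ =ᶠ[𝓝 s] logThenAffine (1/ε) :=
    eventuallyEq_of_mem (Ioi_mem_nhds hs) (eqOn_logThenAffine_of_leftInverse hδ)
  have hderiv := (hasDerivAt_logThenAffine (1/ε) hs).congr_of_eventuallyEq hδ_eq
  refine ⟨hderiv.differentiableAt, ?_⟩
  rw [hderiv.deriv, ← div_eq_mul_inv, one_le_div (lt_min hs (exp_pos _))]
  exact min_le_left _ _

theorem stmt_3 (ε : ℝ) (hε : 0 < ε) (γ δ : ℝ → ℝ)
    (hγ : ∀ r : ℝ, γ r = if r ≤ 1/ε then Real.exp r else Real.exp (1/ε) * (1 + r - 1/ε))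
    (hδ : ∀ r : ℝ, δ (γ r) = r) :
    ∀ s : ℝ, 0 < s → DifferentiableAt ℝ δ s ∧ 1 ≤ s * deriv δ s :=
  stmt_3_general ε γ δ hγ hδ

end
end

section
/- Let (Ω, μ) be a measure space and let j : ℝ³ → [0,+∞] be convex and lower semicontinuous with j(0) = 0. Let (ε_k) be a sequence of positive numbers with ε_k → 0, and let (u_k) and u be square-integrable functions Ω → ℝ³ such that u_k converges to u weakly in L²(μ; ℝ³), i.e. ∫_Ω ⟨u_k(x), g(x)⟩ dμ(x) → ∫_Ω ⟨u(x), g(x)⟩ dμ(x) for every g ∈ L²(μ; ℝ³). Then ∫_Ω j(u(x)) dμ(x) ≤ liminf_{k→∞} ∫_Ω j^{ε_k}(u_k(x)) dμ(x), the integrals being Lebesgue integrals with values in [0,+∞]. -/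
/-!
For fixed `δ > 0` the Moreau envelope `j^δ` is finite, and at every `x` it has an exact affine
minorant with slope `(x - p x) / δ`, where `p x` is a proximal point of `x`. Convexity of `j`
makes the proximal map `1`-Lipschitz, so this slope is measurable and grows at most linearly;
along `v ∈ L²` it is therefore an `L²` field `g`, and integrating
`j^δ (u k) ≥ j^δ v + ⟪g, u k - v⟫` gives `∫ j^δ v ≤ liminf ∫ j^δ (u k)` by weak convergence.
Since `j^ε ≥ j^δ` for `ε ≤ δ` and `j^δ ↑ j` as `δ ↓ 0` by lower semicontinuity of `j`,
monotone convergence concludes.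
-/

open NNReal ENNReal MeasureTheory Filter Topology RealInnerProductSpace Set

theorem convexOn_nnreal_univ_iff {E : Type*} [AddCommGroup E] [Module ℝ E] {j : E → ℝ≥0∞} :
    ConvexOn ℝ≥0 univ j ↔ ∀ x y : E, ∀ t : ℝ, 0 ≤ t → t ≤ 1 →
      j (t • x + (1 - t) • y) ≤ ENNReal.ofReal t * j x + ENNReal.ofReal (1 - t) * j y := by
  refine ⟨fun h x y t ht0 ht1 => ?_, fun h => ⟨convex_univ, fun x _ y _ a b _ _ hab => ?_⟩⟩
  · lift t to ℝ≥0 using ht0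
    have ht1' : t ≤ 1 := by exact_mod_cast ht1
    calc j ((t : ℝ) • x + (1 - (t : ℝ)) • y) = j (t • x + (1 - t) • y) := by
          rw [NNReal.smul_def, NNReal.smul_def, NNReal.coe_sub ht1', NNReal.coe_one]
      _ ≤ t • j x + (1 - t) • j y :=
          h.2 (mem_univ x) (mem_univ y) (by positivity) (by positivity) (add_tsub_cancel_of_le ht1')
      _ = _ := by
          rw [ENNReal.smul_def, ENNReal.smul_def, ← ENNReal.ofReal_coe_nnreal,
            ← ENNReal.ofReal_coe_nnreal (p := 1 - t), NNReal.coe_sub ht1', NNReal.coe_one,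
            smul_eq_mul, smul_eq_mul]
  · obtain rfl : b = 1 - a := by rw [← hab, add_tsub_cancel_left]
    have ha : a ≤ 1 := by rw [← hab]; exact le_self_add
    simpa [NNReal.smul_def, ENNReal.smul_def, NNReal.coe_sub ha, ENNReal.ofReal_sub] using
      h x y a a.2 (by exact_mod_cast ha)

section Envelope

variable {E : Type*} [NormedAddCommGroup E]

noncomputable def moreauEnvelope (j : E → ℝ≥0∞) (ε : ℝ) (x : E) : ℝ≥0∞ :=
  ⨅ y, ENNReal.ofReal (‖x - y‖ ^ 2 / (2 * ε)) + j y

def IsProx (j : E → ℝ≥0∞) (δ : ℝ) (x p : E) : Prop :=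
  ∀ y, ENNReal.ofReal (‖x - p‖ ^ 2 / (2 * δ)) + j p ≤ ENNReal.ofReal (‖x - y‖ ^ 2 / (2 * δ)) + j y

variable {j : E → ℝ≥0∞} {δ : ℝ} {x p : E}

theorem moreauEnvelope_le (j : E → ℝ≥0∞) (ε : ℝ) (x y : E) :
    moreauEnvelope j ε x ≤ ENNReal.ofReal (‖x - y‖ ^ 2 / (2 * ε)) + j y :=
  iInf_le _ y

theorem moreauEnvelope_le_self (j : E → ℝ≥0∞) (ε : ℝ) (x : E) : moreauEnvelope j ε x ≤ j x := by
  simpa using moreauEnvelope_le j ε x x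

theorem moreauEnvelope_le_ofReal (hj0 : j 0 = 0) (ε : ℝ) (x : E) :
    moreauEnvelope j ε x ≤ ENNReal.ofReal (‖x‖ ^ 2 / (2 * ε)) := by
  simpa [hj0] using moreauEnvelope_le j ε x 0

theorem moreauEnvelope_ne_top (hj0 : j 0 = 0) (ε : ℝ) (x : E) : moreauEnvelope j ε x ≠ ⊤ :=
  ne_top_of_le_ne_top ofReal_ne_top (moreauEnvelope_le_ofReal hj0 ε x)

theorem moreauEnvelope_anti {ε₁ ε₂ : ℝ} (hε₁ : 0 < ε₁) (h : ε₁ ≤ ε₂) (x : E) :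
    moreauEnvelope j ε₂ x ≤ moreauEnvelope j ε₁ x :=
  iInf_mono fun _ => by gcongr

namespace IsProx

theorem moreauEnvelope_eq (hp : IsProx j δ x p) :
    moreauEnvelope j δ x = ENNReal.ofReal (‖x - p‖ ^ 2 / (2 * δ)) + j p :=
  le_antisymm (moreauEnvelope_le j δ x p) (le_iInf hp)

theorem le_ofReal (hj0 : j 0 = 0) (hp : IsProx j δ x p) :
    ENNReal.ofReal (‖x - p‖ ^ 2 / (2 * δ)) + j p ≤ ENNReal.ofReal (‖x‖ ^ 2 / (2 * δ)) := by
  simpa [hj0] using hp 0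

theorem ne_top (hj0 : j 0 = 0) (hp : IsProx j δ x p) : j p ≠ ⊤ :=
  ne_top_of_le_ne_top ofReal_ne_top (le_add_self.trans (hp.le_ofReal hj0))

theorem norm_sub_le (hj0 : j 0 = 0) (hδ : 0 < δ) (hp : IsProx j δ x p) : ‖x - p‖ ≤ ‖x‖ := by
  have h := le_add_right le_rfl |>.trans (hp.le_ofReal hj0)
  rw [ENNReal.ofReal_le_ofReal_iff (by positivity),
    div_le_div_iff_of_pos_right (by positivity)] at h
  exact pow_le_pow_iff_left₀ (norm_nonneg _) (norm_nonneg _) two_ne_zero |>.mp h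

end IsProx

theorem exists_isProx [ProperSpace E] (hlsc : LowerSemicontinuous j) (hj0 : j 0 = 0)
    (hδ : 0 < δ) (x : E) : ∃ p, IsProx j δ x p := by
  set Φ : E → ℝ≥0∞ := fun y => ENNReal.ofReal (‖x - y‖ ^ 2 / (2 * δ)) + j y
  have hΦ : LowerSemicontinuous Φ :=
    (ENNReal.continuous_ofReal.comp (by fun_prop)).lowerSemicontinuous.add hlsc
  have h0 : (0 : E) ∈ Metric.closedBall 0 (2 * ‖x‖) := Metric.mem_closedBall_self (by positivity)
  obtain ⟨p, -, hp⟩ := (hΦ.lowerSemicontinuousOn _).exists_isMinOn ⟨0, h0⟩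
    (isCompact_closedBall 0 (2 * ‖x‖))
  refine ⟨p, fun y => ?_⟩
  by_cases hy : y ∈ Metric.closedBall 0 (2 * ‖x‖)
  · exact hp hy
  -- outside the ball `y` is farther from `x` than `0` is
  have hxy : ‖x‖ ≤ ‖x - y‖ := by
    rw [Metric.mem_closedBall, dist_zero_right, not_le] at hy
    linarith [norm_sub_norm_le y x, norm_sub_rev x y]
  calc Φ p ≤ Φ 0 := hp h0
    _ = ENNReal.ofReal (‖x‖ ^ 2 / (2 * δ)) := by simp [Φ, hj0]
    _ ≤ ENNReal.ofReal (‖x - y‖ ^ 2 / (2 * δ)) := by gcongr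
    _ ≤ Φ y := le_self_add

theorem iSup_moreauEnvelope_one_div [ProperSpace E] (hlsc : LowerSemicontinuous j)
    (hj0 : j 0 = 0) (x : E) : ⨆ m : ℕ, moreauEnvelope j (1 / (m + 1)) x = j x := by
  refine le_antisymm (iSup_le fun m => moreauEnvelope_le_self j _ x) ?_
  set S := ⨆ m : ℕ, moreauEnvelope j (1 / (m + 1)) x
  rcases eq_or_ne S ⊤ with hS | hS
  · simp [hS]
  choose p hp using fun m : ℕ => exists_isProx hlsc hj0 (by positivity : (0 : ℝ) < 1 / (m + 1)) x
  have hle : ∀ m, ENNReal.ofReal (‖x - p m‖ ^ 2 / (2 * (1 / (m + 1)))) + j (p m) ≤ S :=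
    fun m => (hp m).moreauEnvelope_eq ▸ le_iSup (fun m : ℕ => moreauEnvelope j (1 / (m + 1)) x) m
  -- the proximal points converge to `x`, and `j` is lower semicontinuous there
  have hdist : ∀ m : ℕ, dist (p m) x ≤ √(2 * S.toReal * (1 / (m + 1))) := by
    intro m
    have h := le_self_add.trans (hle m)
    rw [← ofReal_toReal hS, ENNReal.ofReal_le_ofReal_iff toReal_nonneg,
      div_le_iff₀ (by positivity)] at h
    rw [dist_eq_norm, norm_sub_rev]
    exact Real.le_sqrt_of_sq_le (by linarith)
  have hlim : Tendsto p atTop (𝓝 x) := by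
    refine tendsto_iff_dist_tendsto_zero.mpr (squeeze_zero (fun _ => dist_nonneg) hdist ?_)
    simpa using (tendsto_one_div_add_atTop_nhds_zero_nat.const_mul (2 * S.toReal)).sqrt
  refine le_of_forall_lt fun c hc => ?_
  obtain ⟨m, hm⟩ := (hlim.eventually (hlsc x c hc)).exists
  exact hm.trans_le (le_add_self.trans (hle m))

end Envelope

theorem MeasureTheory.ofReal_integral_le_lintegral_ofReal {Ω : Type*} [MeasurableSpace Ω]
    {μ : Measure Ω} {f : Ω → ℝ} (hf : Integrable f μ) :
    ENNReal.ofReal (∫ x, f x ∂μ) ≤ ∫⁻ x, ENNReal.ofReal (f x) ∂μ := by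
  rw [integral_eq_lintegral_pos_part_sub_lintegral_neg_part hf]
  exact (ENNReal.ofReal_le_ofReal (sub_le_self _ toReal_nonneg)).trans ofReal_toReal_le

section InnerProduct

variable {E : Type*} [NormedAddCommGroup E] [InnerProductSpace ℝ E] {j : E → ℝ≥0∞} {δ : ℝ}
  {x p : E}

theorem MeasureTheory.MemLp.integrable_inner {Ω : Type*} [MeasurableSpace Ω] {μ : Measure Ω}
    {f g : Ω → E} (hf : MemLp f 2 μ) (hg : MemLp g 2 μ) :
    Integrable (fun x => ⟪f x, g x⟫) μ :=
  (L2.integrable_inner hf.toLp hg.toLp).congr (by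
    filter_upwards [hf.coeFn_toLp, hg.coeFn_toLp] with x hfx hgx
    rw [hfx, hgx])

namespace IsProx

theorem ofReal_add_inner_div_le (hconv : ConvexOn ℝ≥0 univ j) (hj0 : j 0 = 0) (hδ : 0 < δ)
    (hp : IsProx j δ x p) (y : E) :
    ENNReal.ofReal ((j p).toReal + ⟪x - p, y - p⟫ / δ) ≤ j y := by
  rcases eq_or_ne (j y) ⊤ with hy | hy
  · simp [hy]
  have hpt := hp.ne_top hj0
  rw [ENNReal.ofReal_le_iff_le_toReal hy]
  set a := (j p).toReal
  set b := (j y).toReal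
  -- compare the objective at `p` with its value at `p + t • (y - p)`, then let `t → 0`
  have key : ∀ t : ℝ, 0 < t → t ≤ 1 →
      a + ⟪x - p, y - p⟫ / δ ≤ b + t * (‖y - p‖ ^ 2 / (2 * δ)) := by
    intro t ht0 ht1
    have hjt : j (p + t • (y - p)) ≤ ENNReal.ofReal (t * b + (1 - t) * a) := by
      have := convexOn_nnreal_univ_iff.mp hconv y p t ht0.le ht1
      rwa [← ofReal_toReal hy, ← ofReal_toReal hpt, ← ENNReal.ofReal_mul ht0.le,
        ← ENNReal.ofReal_mul (sub_nonneg.2 ht1), ← ENNReal.ofReal_add (by positivity)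
        (mul_nonneg (sub_nonneg.2 ht1) toReal_nonneg),
        show t • y + (1 - t) • p = p + t • (y - p) by module] at this
    have hmin := (hp (p + t • (y - p))).trans (add_le_add le_rfl hjt)
    rw [← ofReal_toReal hpt, ← ENNReal.ofReal_add (by positivity) toReal_nonneg,
      ← ENNReal.ofReal_add (by positivity) (by positivity),
      ENNReal.ofReal_le_ofReal_iff (by positivity)] at hmin
    have hexp : ‖x - (p + t • (y - p))‖ ^ 2
        = ‖x - p‖ ^ 2 - 2 * t * ⟪x - p, y - p⟫ + t ^ 2 * ‖y - p‖ ^ 2 := by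
      rw [show x - (p + t • (y - p)) = (x - p) - t • (y - p) by abel, norm_sub_sq_real,
        real_inner_smul_right, norm_smul, Real.norm_eq_abs, mul_pow, sq_abs]
      ring
    rw [hexp] at hmin
    have : t * (a + ⟪x - p, y - p⟫ / δ) ≤ t * (b + t * (‖y - p‖ ^ 2 / (2 * δ))) := by
      field_simp at hmin ⊢
      nlinarith
    exact le_of_mul_le_mul_left this ht0
  have hlim : Tendsto (fun t : ℝ => b + t * (‖y - p‖ ^ 2 / (2 * δ))) (𝓝[>] 0) (𝓝 b) := by
    refine ((show Continuous fun t : ℝ => b + t * (‖y - p‖ ^ 2 / (2 * δ)) by fun_prop).tendsto'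
      0 b (by simp)).mono_left nhdsWithin_le_nhds
  exact ge_of_tendsto hlim (eventually_of_mem (Ioc_mem_nhdsGT one_pos) fun t ht => key t ht.1 ht.2)

theorem norm_sub_le_norm_sub (hconv : ConvexOn ℝ≥0 univ j) (hj0 : j 0 = 0) (hδ : 0 < δ)
    {x₁ x₂ p₁ p₂ : E} (hp₁ : IsProx j δ x₁ p₁) (hp₂ : IsProx j δ x₂ p₂) :
    ‖p₁ - p₂‖ ≤ ‖x₁ - x₂‖ := by
  have h₁ := hp₁.ofReal_add_inner_div_le hconv hj0 hδ p₂
  have h₂ := hp₂.ofReal_add_inner_div_le hconv hj0 hδ p₁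
  rw [ENNReal.ofReal_le_iff_le_toReal (hp₂.ne_top hj0)] at h₁
  rw [ENNReal.ofReal_le_iff_le_toReal (hp₁.ne_top hj0)] at h₂
  have hsum : ⟪x₁ - p₁, p₂ - p₁⟫ + ⟪x₂ - p₂, p₁ - p₂⟫ ≤ 0 := by
    have h : (⟪x₁ - p₁, p₂ - p₁⟫ + ⟪x₂ - p₂, p₁ - p₂⟫) / δ ≤ 0 := by
      rw [add_div]
      linarith
    simpa using (div_le_iff₀ hδ).mp h
  have hsq : ‖p₁ - p₂‖ ^ 2 ≤ ‖x₁ - x₂‖ * ‖p₁ - p₂‖ := by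
    have hid : ‖p₁ - p₂‖ ^ 2
        = ⟪x₁ - x₂, p₁ - p₂⟫ + (⟪x₁ - p₁, p₂ - p₁⟫ + ⟪x₂ - p₂, p₁ - p₂⟫) := by
      rw [← real_inner_self_eq_norm_sq, ← neg_sub p₁ p₂, inner_neg_right]
      simp only [inner_sub_left]
      ring
    rw [hid]
    linarith [real_inner_le_norm (x₁ - x₂) (p₁ - p₂)]
  nlinarith [norm_nonneg (p₁ - p₂), norm_nonneg (x₁ - x₂)]

theorem ofReal_add_inner_le_moreauEnvelope (hconv : ConvexOn ℝ≥0 univ j) (hj0 : j 0 = 0)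
    (hδ : 0 < δ) (hp : IsProx j δ x p) (w : E) :
    ENNReal.ofReal ((moreauEnvelope j δ x).toReal + ⟪δ⁻¹ • (x - p), w - x⟫) ≤
      moreauEnvelope j δ w := by
  refine le_iInf fun y => ?_
  rw [hp.moreauEnvelope_eq, ENNReal.toReal_add ofReal_ne_top (hp.ne_top hj0),
    toReal_ofReal (by positivity), real_inner_smul_left]
  -- completing the square: the gap is `‖(y - w) + (x - p)‖² / (2δ)`
  have hsq : ‖x - p‖ ^ 2 / (2 * δ) + δ⁻¹ * ⟪x - p, w - x⟫ ≤
      ‖w - y‖ ^ 2 / (2 * δ) + ⟪x - p, y - p⟫ / δ := by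
    have hgap : ‖w - y‖ ^ 2 / (2 * δ) + ⟪x - p, y - p⟫ / δ -
        (‖x - p‖ ^ 2 / (2 * δ) + δ⁻¹ * ⟪x - p, w - x⟫) = ‖(y - w) + (x - p)‖ ^ 2 / (2 * δ) := by
      rw [norm_add_sq_real, norm_sub_rev w y,
        show y - p = (y - w) + (w - x) + (x - p) by abel, inner_add_right, inner_add_right,
        real_inner_self_eq_norm_sq, real_inner_comm (x - p) (y - w)]
      field_simp
      ring
    linarith [show 0 ≤ ‖(y - w) + (x - p)‖ ^ 2 / (2 * δ) by positivity]
  calc ENNReal.ofReal (‖x - p‖ ^ 2 / (2 * δ) + (j p).toReal + δ⁻¹ * ⟪x - p, w - x⟫)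
      ≤ ENNReal.ofReal (‖w - y‖ ^ 2 / (2 * δ) + ((j p).toReal + ⟪x - p, y - p⟫ / δ)) :=
        ENNReal.ofReal_le_ofReal (by linarith)
    _ ≤ ENNReal.ofReal (‖w - y‖ ^ 2 / (2 * δ)) + j y :=
        ENNReal.ofReal_add_le.trans (add_le_add le_rfl (hp.ofReal_add_inner_div_le hconv hj0 hδ y))

end IsProx

theorem exists_lipschitzWith_isProx [ProperSpace E] (hconv : ConvexOn ℝ≥0 univ j)
    (hlsc : LowerSemicontinuous j) (hj0 : j 0 = 0) (hδ : 0 < δ) :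
    ∃ p : E → E, LipschitzWith 1 p ∧ ∀ x, IsProx j δ x (p x) := by
  choose p hp using exists_isProx hlsc hj0 hδ
  refine ⟨p, LipschitzWith.of_dist_le_mul fun x y => ?_, hp⟩
  simpa [dist_eq_norm] using (hp x).norm_sub_le_norm_sub hconv hj0 hδ (hp y)

theorem measurable_moreauEnvelope [ProperSpace E] [MeasurableSpace E] [BorelSpace E]
    (hconv : ConvexOn ℝ≥0 univ j) (hlsc : LowerSemicontinuous j) (hj0 : j 0 = 0) (hδ : 0 < δ) :
    Measurable (moreauEnvelope j δ) := by
  obtain ⟨p, hpL, hp⟩ := exists_lipschitzWith_isProx hconv hlsc hj0 hδ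
  have hpc := hpL.continuous
  rw [show moreauEnvelope j δ = fun x => ENNReal.ofReal (‖x - p x‖ ^ 2 / (2 * δ)) + j (p x) from
    funext fun x => (hp x).moreauEnvelope_eq]
  exact (ENNReal.continuous_ofReal.comp (by fun_prop)).measurable.add
    (hlsc.measurable.comp hpc.measurable)

theorem lintegral_moreauEnvelope_le_liminf [ProperSpace E] [MeasurableSpace E] [BorelSpace E]
    {Ω : Type*} [MeasurableSpace Ω] {μ : Measure Ω} (hconv : ConvexOn ℝ≥0 univ j)
    (hlsc : LowerSemicontinuous j) (hj0 : j 0 = 0) (hδ : 0 < δ) {u : ℕ → Ω → E} {v : Ω → E}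
    (hu : ∀ k, MemLp (u k) 2 μ) (hv : MemLp v 2 μ)
    (hweak : ∀ g : Ω → E, MemLp g 2 μ →
      Tendsto (fun k => ∫ x, ⟪u k x, g x⟫ ∂μ) atTop (𝓝 (∫ x, ⟪v x, g x⟫ ∂μ))) :
    ∫⁻ x, moreauEnvelope j δ (v x) ∂μ ≤
      liminf (fun k => ∫⁻ x, moreauEnvelope j δ (u k x) ∂μ) atTop := by
  obtain ⟨p, hpL, hp⟩ := exists_lipschitzWith_isProx hconv hlsc hj0 hδ
  set F : Ω → ℝ := fun x => (moreauEnvelope j δ (v x)).toReal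
  set g : Ω → E := fun x => δ⁻¹ • (v x - p (v x))
  have hg : MemLp g 2 μ := by
    refine hv.of_le_mul (c := δ⁻¹) ?_ (ae_of_all _ fun x => ?_)
    · exact ((continuous_id.sub hpL.continuous).const_smul δ⁻¹).comp_aestronglyMeasurable
        hv.aestronglyMeasurable
    · rw [norm_smul, Real.norm_of_nonneg (by positivity)]
      exact mul_le_mul_of_nonneg_left ((hp (v x)).norm_sub_le hj0 hδ) (by positivity)
  have hF : Integrable F μ := by
    refine ((hv.integrable_norm_pow two_ne_zero).div_const (2 * δ)).mono'
      ((measurable_moreauEnvelope hconv hlsc hj0 hδ).ennreal_toReal.comp_aemeasurable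
        hv.aemeasurable).aestronglyMeasurable (ae_of_all _ fun x => ?_)
    rw [Real.norm_of_nonneg toReal_nonneg]
    exact toReal_le_of_le_ofReal (by positivity) (moreauEnvelope_le_ofReal hj0 δ (v x))
  set I : ℕ → ℝ := fun k => ∫ x, F x + ⟪u k x, g x⟫ - ⟪v x, g x⟫ ∂μ
  have hI_le : ∀ k, ENNReal.ofReal (I k) ≤ ∫⁻ x, moreauEnvelope j δ (u k x) ∂μ := by
    intro k
    refine (ofReal_integral_le_lintegral_ofReal
      ((hF.add ((hu k).integrable_inner hg)).sub (hv.integrable_inner hg))).trans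
      (lintegral_mono fun x => ?_)
    have := (hp (v x)).ofReal_add_inner_le_moreauEnvelope hconv hj0 hδ (u k x)
    rwa [real_inner_comm, inner_sub_left, ← add_sub_assoc] at this
  have hI : Tendsto I atTop (𝓝 (∫ x, F x ∂μ)) := by
    have hsplit : ∀ w : Ω → E, MemLp w 2 μ → ∫ x, F x + ⟪w x, g x⟫ - ⟪v x, g x⟫ ∂μ =
        ∫ x, F x ∂μ + ∫ x, ⟪w x, g x⟫ ∂μ - ∫ x, ⟪v x, g x⟫ ∂μ := fun w hw => by
      have hFw : Integrable (fun x => F x + ⟪w x, g x⟫) μ := hF.add (hw.integrable_inner hg)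
      rw [integral_sub hFw (hv.integrable_inner hg), integral_add hF (hw.integrable_inner hg)]
    have := ((hweak g hg).const_add (∫ x, F x ∂μ)).sub_const (∫ x, ⟪v x, g x⟫ ∂μ)
    rw [← hsplit v hv, show ∫ x, F x + ⟪v x, g x⟫ - ⟪v x, g x⟫ ∂μ = ∫ x, F x ∂μ by simp] at this
    exact this.congr fun k => (hsplit (u k) (hu k)).symm
  calc ∫⁻ x, moreauEnvelope j δ (v x) ∂μ = ENNReal.ofReal (∫ x, F x ∂μ) := by
        rw [ofReal_integral_eq_lintegral_ofReal hF (ae_of_all _ fun _ => toReal_nonneg)]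
        exact lintegral_congr fun x => (ofReal_toReal (moreauEnvelope_ne_top hj0 δ (v x))).symm
    _ = liminf (fun k => ENNReal.ofReal (I k)) atTop :=
        ((ENNReal.continuous_ofReal.tendsto _).comp hI).liminf_eq.symm
    _ ≤ liminf (fun k => ∫⁻ x, moreauEnvelope j δ (u k x) ∂μ) atTop :=
        liminf_le_liminf (Eventually.of_forall hI_le)

end InnerProduct

theorem stmt_8 {Ω : Type*} [MeasurableSpace Ω] (μ : Measure Ω)
    (j : EuclideanSpace ℝ (Fin 3) → ℝ≥0∞)
    (hconv : ∀ x y : EuclideanSpace ℝ (Fin 3), ∀ t : ℝ, 0 ≤ t → t ≤ 1 →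
      j (t • x + (1 - t) • y) ≤ ENNReal.ofReal t * j x + ENNReal.ofReal (1 - t) * j y)
    (hlsc : LowerSemicontinuous j) (hj0 : j 0 = 0)
    (jeps : ℝ → EuclideanSpace ℝ (Fin 3) → ℝ≥0∞)
    (hjeps : ∀ ε : ℝ, ∀ x : EuclideanSpace ℝ (Fin 3),
      jeps ε x = ⨅ y : EuclideanSpace ℝ (Fin 3),
        (ENNReal.ofReal (‖x - y‖^2 / (2 * ε)) + j y))
    (εs : ℕ → ℝ) (hεpos : ∀ k, 0 < εs k) (hεlim : Tendsto εs atTop (nhds 0))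
    (u : ℕ → Ω → EuclideanSpace ℝ (Fin 3)) (ulim : Ω → EuclideanSpace ℝ (Fin 3))
    (hu : ∀ k, MemLp (u k) 2 μ) (hulim : MemLp ulim 2 μ)
    (hweak : ∀ g : Ω → EuclideanSpace ℝ (Fin 3), MemLp g 2 μ →
      Tendsto (fun k => ∫ x, (inner ℝ (u k x) (g x) : ℝ) ∂μ) atTop
        (nhds (∫ x, (inner ℝ (ulim x) (g x) : ℝ) ∂μ))) :
    (∫⁻ x, j (ulim x) ∂μ) ≤ liminf (fun k => ∫⁻ x, jeps (εs k) (u k x) ∂μ) atTop := by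
  have hconv' := convexOn_nnreal_univ_iff.mpr hconv
  obtain rfl : jeps = moreauEnvelope j := funext fun ε => funext (hjeps ε)
  have hδ : ∀ m : ℕ, (0 : ℝ) < 1 / (m + 1) := fun m => by positivity
  calc ∫⁻ x, j (ulim x) ∂μ = ∫⁻ x, ⨆ m : ℕ, moreauEnvelope j (1 / (m + 1)) (ulim x) ∂μ := by
        simp_rw [iSup_moreauEnvelope_one_div hlsc hj0]
    _ = ⨆ m : ℕ, ∫⁻ x, moreauEnvelope j (1 / (m + 1)) (ulim x) ∂μ :=
        lintegral_iSup'
          (fun m => (measurable_moreauEnvelope hconv' hlsc hj0 (hδ m)).comp_aemeasurable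
            hulim.aemeasurable)
          (ae_of_all _ fun x m₁ m₂ h => moreauEnvelope_anti (hδ m₂) (by gcongr) _)
    _ ≤ _ := iSup_le fun m =>
        (lintegral_moreauEnvelope_le_liminf hconv' hlsc hj0 (hδ m) hu hulim hweak).trans
          (liminf_le_liminf ((hεlim.eventually (gt_mem_nhds (hδ m))).mono fun k hk =>
            lintegral_mono fun x => moreauEnvelope_anti (hεpos k) hk.le _))
end

section
/- Let θ > 0 and c, υ, λ ≥ 0 be real numbers, let p ∈ ℝ, let b = (b₁,b₂,b₃) ∈ ℝ³, let D and G be real 3×3 matrices, and let g ∈ ℝ³. Define the dissipative internal forces by σ^d = −p·I (I the 3×3 identity matrix), B^d = −p·(1,1,1) + c·b, H^d = υ·G, and the entropy flux Q = −(λ/θ)·g. If the mass-balance constraint b₁ + b₂ + b₃ + tr D = 0 holds, then the entropy production satisfies σ^d : D + B^d · b + H^d : G − Q · g = c·|b|² + υ·|G|² + (λ/θ)·|g|² ≥ 0, where A : B = Σ_{i,j} A_{ij}B_{ij} denotes the Frobenius product of 3×3 matrices and |·| the associated Euclidean/Frobenius norms. -/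
/-! The pressure enters the entropy production only through `-p (tr D + b₁ + b₂ + b₃)`, which
vanishes by the mass-balance constraint; every remaining term is a nonnegative coefficient times a
sum of squares. -/

open Finset

section FrobeniusSums

variable {n R : Type*} [Fintype n] [CommRing R]

theorem Matrix.sum_sum_smul_one_mul [DecidableEq n] (a : R) (D : Matrix n n R) :
    ∑ i, ∑ k, (a • (1 : Matrix n n R)) i k * D i k = a * D.trace := by
  simp only [Matrix.smul_apply, Matrix.one_apply, smul_eq_mul, mul_ite, mul_one, mul_zero,
    ite_mul, zero_mul, sum_ite_eq, mem_univ, if_true, Matrix.trace, Matrix.diag, mul_sum]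

theorem Matrix.sum_sum_smul_mul_self (a : R) (G : Matrix n n R) :
    ∑ i, ∑ k, (a • G) i k * G i k = a * ∑ i, ∑ k, G i k ^ 2 := by
  simp only [Matrix.smul_apply, smul_eq_mul, mul_sum, sq, mul_assoc]

theorem sum_mul_mul_self (a : R) (g : n → R) :
    ∑ i, a * g i * g i = a * ∑ i, g i ^ 2 := by
  simp only [mul_sum, sq, mul_assoc]

theorem sum_add_mul_mul_self (p c : R) (b : n → R) :
    ∑ i, (p + c * b i) * b i = p * ∑ i, b i + c * ∑ i, b i ^ 2 := by
  simp only [add_mul, sum_add_distrib, sum_mul_mul_self, mul_sum]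

end FrobeniusSums

theorem stmt_12 (θ c υ lam : ℝ) (hθ : 0 < θ) (hc : 0 ≤ c) (hυ : 0 ≤ υ) (hlam : 0 ≤ lam)
    (p : ℝ) (b g : Fin 3 → ℝ) (D G : Matrix (Fin 3) (Fin 3) ℝ)
    (σd : Matrix (Fin 3) (Fin 3) ℝ) (Bd : Fin 3 → ℝ)
    (Hd : Matrix (Fin 3) (Fin 3) ℝ) (Q : Fin 3 → ℝ)
    (hσd : σd = -p • (1 : Matrix (Fin 3) (Fin 3) ℝ))
    (hBd : Bd = fun i => -p + c * b i)
    (hHd : Hd = υ • G)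
    (hQ : Q = fun i => -(lam / θ) * g i)
    (hmass : b 0 + b 1 + b 2 + Matrix.trace D = 0) :
    (∑ i, ∑ k, σd i k * D i k) + (∑ i, Bd i * b i) + (∑ i, ∑ k, Hd i k * G i k)
        - (∑ i, Q i * g i)
      = c * (∑ i, (b i)^2) + υ * (∑ i, ∑ k, (G i k)^2) + (lam / θ) * (∑ i, (g i)^2) ∧
    0 ≤ c * (∑ i, (b i)^2) + υ * (∑ i, ∑ k, (G i k)^2) + (lam / θ) * (∑ i, (g i)^2) := by
  subst hσd hBd hHd hQ
  have hmass' : ∑ i, b i + D.trace = 0 := by rwa [Fin.sum_univ_three]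
  refine ⟨?_, by positivity⟩
  rw [Matrix.sum_sum_smul_one_mul, sum_add_mul_mul_self, Matrix.sum_sum_smul_mul_self,
    sum_mul_mul_self]
  linear_combination (-p) * hmass'
end
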